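/- arXiv:1711.03340 — 3 statements merged into one kernel-verified Lean document; each statement's English description precedes it below -/
import Mathlib

section
/- The number of equivalence classes of 0-1 words of length n with k ones, under the equivalence identifying a word with its reversal, equals the Losanitsch number L(n,k). -/
def losanitsch : ℕ → ℕ → ℕ
  | 0, k => if k = 0 then 1 else 0
  | 1, k => if k ≤ 1 then 1 else 0
  | n + 2, k =>
      losanitsch n k + (if k = 0 then 0 else n.choose (k - 1)) +
        (if 2 ≤ k then losanitsch n (k - 2) else 0)

def inversions {n : ℕ} (w : Fin n → Bool) : ℕ :=
  (Finset.univ.filter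
    (fun p : Fin n × Fin n => p.1 < p.2 ∧ w p.1 = true ∧ w p.2 = false)).card

def words (n k : ℕ) : Finset (Fin n → Bool) :=
  Finset.univ.filter (fun w => (Finset.univ.filter (fun i => w i = true)).card = k)

/-!
Reversal `w ↦ w ∘ Fin.rev` is an involution of `words n k`, and the classes of the statement are
its orbits `{w, w ∘ Fin.rev}`. Counting them as in Burnside's lemma gives
`2 · #classes = C(n, k) + P(n, k)`, where `P(n, k)` counts palindromes. Stripping the first and last
letter of a palindrome gives `P(n + 2, k) = P(n, k) + P(n, k - 2)`, and together with Pascal's rule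
this shows `2 · L(n, k) = C(n, k) + P(n, k)` by induction on `n`.
-/

open Finset

section Involution

variable {α : Type*} [DecidableEq α] {σ : α → α}

theorem Function.Involutive.pair_eq_pair_iff (hσ : Function.Involutive σ) {x y : α} :
    ({y, σ y} : Finset α) = {x, σ x} ↔ y ∈ ({x, σ x} : Finset α) := by
  refine ⟨fun h => h ▸ mem_insert_self y _, fun h => ?_⟩
  rcases mem_insert.1 h with rfl | h
  · rfl
  · rw [mem_singleton.1 h, hσ x, pair_comm]

theorem card_pair_apply (x : α) : #{x, σ x} = if σ x = x then 1 else 2 := by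
  by_cases h : σ x = x
  · simp [h]
  · rw [if_neg h, card_pair (Ne.symm h)]

theorem Function.Involutive.sum_card_image_pair (hσ : Function.Involutive σ) {s : Finset α}
    (hs : ∀ x ∈ s, σ x ∈ s) : ∑ t ∈ s.image (fun x => ({x, σ x} : Finset α)), #t = #s := by
  rw [card_eq_sum_card_image (fun x => ({x, σ x} : Finset α)) s]
  refine sum_congr rfl fun t ht => ?_
  obtain ⟨x, hx, rfl⟩ := mem_image.1 ht
  have hsub : {x, σ x} ⊆ s := insert_subset hx (singleton_subset_iff.2 (hs x hx))
  rw [filter_congr fun y _ => hσ.pair_eq_pair_iff, filter_mem_eq_inter, inter_eq_right.2 hsub]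

theorem Function.Involutive.two_mul_card_image_pair (hσ : Function.Involutive σ)
    {s : Finset α} (hs : ∀ x ∈ s, σ x ∈ s) :
    2 * #(s.image fun x => ({x, σ x} : Finset α)) = #s + #{x ∈ s | σ x = x} := by
  set orbits := s.image fun x => ({x, σ x} : Finset α)
  have hfixed : #{t ∈ orbits | #t = 1} = #{x ∈ s | σ x = x} := by
    have : {t ∈ orbits | #t = 1} = {x ∈ s | σ x = x}.image fun x => {x, σ x} := by
      simp only [orbits, filter_image, card_pair_apply]
      simp
    rw [this, card_image_of_injOn]
    intro x hx y hy h
    simpa [(mem_filter.1 hx).2, (mem_filter.1 hy).2] using h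
  calc 2 * #orbits = ∑ t ∈ orbits, (#t + if #t = 1 then 1 else 0) := by
        rw [mul_comm, ← smul_eq_mul, ← sum_const]
        refine sum_congr rfl fun t ht => ?_
        obtain ⟨x, -, rfl⟩ := mem_image.1 ht
        rw [card_pair_apply]
        split_ifs <;> simp_all
    _ = #s + #{x ∈ s | σ x = x} := by
        rw [sum_add_distrib, hσ.sum_card_image_pair hs, ← card_filter, hfixed]

end Involution

section Words

variable {n : ℕ}

def ones (w : Fin n → Bool) : ℕ := #{i | w i = true}

theorem mem_words {k : ℕ} {w : Fin n → Bool} : w ∈ words n k ↔ ones w = k := by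
  simp [words, ones]

theorem card_words (n k : ℕ) : #(words n k) = n.choose k := by
  calc #(words n k) = #(powersetCard k (univ : Finset (Fin n))) := ?_
    _ = n.choose k := by simp
  refine card_nbij' (fun w => ({i | w i = true} : Finset (Fin n))) (fun s i => decide (i ∈ s))
    ?_ ?_ ?_ ?_
  · intro w hw
    simpa [mem_powersetCard, words] using hw
  · intro s hs
    simpa [words] using (mem_powersetCard.1 hs).2
  · intro w _
    funext i
    simp
  · intro s _
    ext i
    simp

theorem ones_comp_rev (w : Fin n → Bool) : ones (w ∘ Fin.rev) = ones w := by
  simp only [ones, card_filter]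
  exact Fintype.sum_equiv Fin.revPerm _ _ fun _ => rfl

theorem comp_rev_mem_words {k : ℕ} {w : Fin n → Bool} (hw : w ∈ words n k) :
    w ∘ Fin.rev ∈ words n k := by
  rwa [mem_words, ones_comp_rev, ← mem_words]

theorem comp_rev_involutive : Function.Involutive fun w : Fin n → Bool => w ∘ Fin.rev :=
  fun w => by simp [Function.comp_def]

def wrap (b : Bool) (v : Fin n → Bool) : Fin (n + 2) → Bool := Fin.cons b (Fin.snoc v b)

theorem wrap_zero (b : Bool) (v : Fin n → Bool) : wrap b v 0 = b := rfl

theorem init_tail_wrap (b : Bool) (v : Fin n → Bool) : Fin.init (Fin.tail (wrap b v)) = v := by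
  simp [wrap]

theorem wrap_injective (b : Bool) : Function.Injective (wrap (n := n) b) :=
  fun v₁ v₂ h => by rw [← init_tail_wrap b v₁, h, init_tail_wrap]

theorem wrap_init_tail (w : Fin (n + 2) → Bool) (h : w (Fin.last _) = w 0) :
    wrap (w 0) (Fin.init (Fin.tail w)) = w := by
  have h' : Fin.tail w (Fin.last n) = w 0 := h
  rw [wrap, ← h', Fin.snoc_init_self, h', Fin.cons_self_tail]

theorem wrap_comp_rev (b : Bool) (v : Fin n → Bool) :
    wrap b v ∘ Fin.rev = wrap b (v ∘ Fin.rev) := by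
  simp [wrap, Fin.cons_comp_rev, Fin.snoc_comp_rev, Fin.cons_snoc_eq_snoc_cons]

theorem wrap_comp_rev_eq_iff {b : Bool} {v : Fin n → Bool} :
    wrap b v ∘ Fin.rev = wrap b v ↔ v ∘ Fin.rev = v := by
  rw [wrap_comp_rev, (wrap_injective b).eq_iff]

theorem ones_wrap (b : Bool) (v : Fin n → Bool) : ones (wrap b v) = ones v + 2 * b.toNat := by
  rw [ones, ones, card_filter, card_filter, Fin.sum_univ_succ, Fin.sum_univ_castSucc]
  cases b <;> simp [wrap]
  omega

def palindromes (n k : ℕ) : Finset (Fin n → Bool) := {w ∈ words n k | w ∘ Fin.rev = w}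

theorem palindromes_of_le_one (hn : n ≤ 1) (k : ℕ) : palindromes n k = words n k := by
  refine filter_true_of_mem fun w _ => funext fun i => congrArg w (Fin.ext ?_)
  simp only [Fin.val_rev]
  omega

theorem card_filter_palindromes_head (k : ℕ) (b : Bool) :
    #{w ∈ palindromes (n + 2) k | w 0 = b} =
      #{v : Fin n → Bool | v ∘ Fin.rev = v ∧ ones v + 2 * b.toNat = k} := by
  refine card_nbij' (fun w => Fin.init (Fin.tail w)) (wrap b) ?_ ?_ ?_ ?_
  · rintro w hw
    simp only [palindromes, coe_filter, mem_filter, mem_words, Set.mem_ofPred_eq, mem_univ,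
      true_and] at hw ⊢
    obtain ⟨⟨hk, hpal⟩, rfl⟩ := hw
    have hwrap := wrap_init_tail w (by simpa using congrFun hpal 0)
    rw [← hwrap, ones_wrap] at hk
    rw [← hwrap, wrap_comp_rev_eq_iff] at hpal
    exact ⟨hpal, hk⟩
  · intro v hv
    simp only [coe_filter, mem_univ, true_and, Set.mem_ofPred_eq] at hv
    obtain ⟨hpal, hk⟩ := hv
    simp only [palindromes, coe_filter, mem_filter, mem_words, Set.mem_ofPred_eq]
    exact ⟨⟨(ones_wrap b v).trans hk, wrap_comp_rev_eq_iff.2 hpal⟩, wrap_zero b v⟩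
  · rintro w hw
    simp only [palindromes, coe_filter, mem_filter, Set.mem_ofPred_eq] at hw
    obtain ⟨⟨-, hpal⟩, rfl⟩ := hw
    exact wrap_init_tail w (by simpa using congrFun hpal 0)
  · intro v _
    exact init_tail_wrap b v

theorem card_palindromes_add_two (k : ℕ) :
    #(palindromes (n + 2) k) =
      #(palindromes n k) + if 2 ≤ k then #(palindromes n (k - 2)) else 0 := by
  have hfalse : #{w ∈ palindromes (n + 2) k | w 0 = false} = #(palindromes n k) := by
    rw [card_filter_palindromes_head]
    congr 1
    ext v
    simp [palindromes, mem_words, and_comm]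
  have htrue : #{w ∈ palindromes (n + 2) k | ¬w 0 = false} =
      if 2 ≤ k then #(palindromes n (k - 2)) else 0 := by
    simp only [Bool.not_eq_false, card_filter_palindromes_head, Bool.toNat_true]
    split_ifs with hk
    · congr 1
      ext v
      simp only [palindromes, mem_filter, mem_univ, true_and, mem_words]
      rw [and_comm]
      exact and_congr_left' (by omega)
    · rw [card_eq_zero, filter_eq_empty_iff]
      rintro v - ⟨-, hv⟩
      omega
  rw [← card_filter_add_card_filter_not (fun w => w 0 = false), hfalse, htrue]

end Words

theorem Nat.choose_add_two_add_two (n k : ℕ) :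
    (n + 2).choose (k + 2) = n.choose k + 2 * n.choose (k + 1) + n.choose (k + 2) := by
  rw [Nat.choose_succ_succ (n + 1), Nat.choose_succ_succ n, Nat.choose_succ_succ n]
  ring

theorem two_mul_losanitsch : ∀ n k : ℕ, 2 * losanitsch n k = n.choose k + #(palindromes n k)
  | 0, k => by
    rw [palindromes_of_le_one zero_le_one, card_words]
    cases k <;> simp [losanitsch]
  | 1, k => by
    rw [palindromes_of_le_one le_rfl, card_words]
    match k with
    | 0 | 1 => simp [losanitsch]
    | k + 2 => simp [losanitsch, Nat.choose_eq_zero_of_lt (by omega : 1 < k + 2)]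
  | n + 2, 0 => by
    have := two_mul_losanitsch n 0
    simp [losanitsch, card_palindromes_add_two] at this ⊢
    omega
  | n + 2, 1 => by
    have := two_mul_losanitsch n 1
    simp [losanitsch, card_palindromes_add_two] at this ⊢
    omega
  | n + 2, k + 2 => by
    have ih₁ := two_mul_losanitsch n (k + 2)
    have ih₂ := two_mul_losanitsch n k
    simp [losanitsch, card_palindromes_add_two, Nat.choose_add_two_add_two]
    omega

theorem stmt_12 (n k : ℕ) :
    ((words n k).image
      (fun w => ({w, fun i => w (Fin.rev i)} : Finset (Fin n → Bool)))).card =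
    losanitsch n k := by
  have h : 2 * #((words n k).image fun w => ({w, fun i => w (Fin.rev i)} : Finset _)) =
      n.choose k + #(palindromes n k) := by
    rw [← card_words]
    exact comp_rev_involutive.two_mul_card_image_pair fun _ => comp_rev_mem_words
  have := two_mul_losanitsch n k
  omega
end

section
/- L(n,k) = ([n choose k]_{q=1} + [n choose k]_{q=−1})/2, where [n choose k]_q is the Gaussian binomial coefficient. -/
noncomputable def gaussBinom (n k : ℕ) : Polynomial ℤ :=
  ∑ w ∈ words n k, Polynomial.X ^ inversions w

/-!
Splitting off the last letter of a word gives the q-Pascal rule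
`[n+1, k+1]_q = q^(k+1) [n, k+1]_q + [n, k]_q`, and applying it twice gives
`[n+2, k]_q = q^(2k) [n, k]_q + q^(k-1) (q+1) [n, k-1]_q + [n, k-2]_q`.
At `q = 1` this is a binomial identity; at `q = -1` the middle term vanishes.
Hence `[n, k]_1 + [n, k]_{-1}` obeys the two-step recurrence defining `L(n, k)`.
-/

open Finset Polynomial

section Words

variable {n : ℕ}

def trueCount (w : Fin n → Bool) : ℕ := #{i | w i = true}

lemma trueCount_snoc (w : Fin n → Bool) (b : Bool) :
    trueCount (Fin.snoc w b : Fin (n + 1) → Bool) = trueCount w + b.toNat := by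
  simp only [trueCount, card_filter, Fin.sum_univ_castSucc, Fin.snoc_castSucc, Fin.snoc_last]
  cases b <;> simp

lemma inversions_snoc (w : Fin n → Bool) (b : Bool) :
    inversions (Fin.snoc w b : Fin (n + 1) → Bool) =
      inversions w + if b then 0 else trueCount w := by
  have last_not_lt : ∀ j : Fin n, ¬ Fin.last n < j.castSucc :=
    fun j => not_lt.mpr (Fin.le_last _)
  simp only [inversions, trueCount, card_filter, Fintype.sum_prod_type, Fin.sum_univ_castSucc,
    Fin.snoc_castSucc, Fin.snoc_last, Fin.castSucc_lt_castSucc_iff, Fin.castSucc_lt_last,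
    lt_irrefl, last_not_lt, false_and, if_false, true_and, sum_const_zero, add_zero,
    sum_add_distrib]
  cases b <;> simp

end Words

lemma gaussBinom_eq_sum_ite (n k : ℕ) :
    gaussBinom n k = ∑ w : Fin n → Bool, if trueCount w = k then X ^ inversions w else 0 := by
  rw [gaussBinom, words, sum_filter]
  rfl

lemma gaussBinom_succ (n k : ℕ) :
    gaussBinom (n + 1) k = ∑ w : Fin n → Bool,
      ((if trueCount w + 1 = k then X ^ inversions w else 0) +
        if trueCount w = k then X ^ (inversions w + trueCount w) else 0) := by
  rw [gaussBinom_eq_sum_ite, ← (Fin.snocEquiv fun _ => Bool).sum_comp, Fintype.sum_prod_type,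
    Fintype.sum_bool, ← sum_add_distrib]
  refine sum_congr rfl fun w _ => ?_
  have snocEquiv_eq (b : Bool) :
      Fin.snocEquiv (fun _ => Bool) (b, w) = (Fin.snoc w b : Fin (n + 1) → Bool) := rfl
  simp [snocEquiv_eq, trueCount_snoc, inversions_snoc]

lemma gaussBinom_zero_left (k : ℕ) : gaussBinom 0 k = if k = 0 then 1 else 0 := by
  simp [gaussBinom_eq_sum_ite, trueCount, inversions, @eq_comm _ 0 k]

lemma gaussBinom_succ_zero (n : ℕ) : gaussBinom (n + 1) 0 = gaussBinom n 0 := by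
  rw [gaussBinom_succ, gaussBinom_eq_sum_ite]
  refine sum_congr rfl fun w _ => ?_
  by_cases h : trueCount w = 0 <;> simp [h]

lemma gaussBinom_zero_right (n : ℕ) : gaussBinom n 0 = 1 := by
  induction n with
  | zero => simp [gaussBinom_zero_left]
  | succ n ih => rw [gaussBinom_succ_zero, ih]

lemma gaussBinom_succ_succ (n k : ℕ) :
    gaussBinom (n + 1) (k + 1) = X ^ (k + 1) * gaussBinom n (k + 1) + gaussBinom n k := by
  rw [gaussBinom_succ, sum_add_distrib, add_comm, gaussBinom_eq_sum_ite, gaussBinom_eq_sum_ite,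
    mul_sum]
  congr 1
  · refine sum_congr rfl fun w _ => ?_
    split_ifs with h
    · rw [h, pow_add, mul_comm]
    · rw [mul_zero]
  · simp

lemma gaussBinom_one_left (k : ℕ) : gaussBinom 1 k = if k ≤ 1 then 1 else 0 := by
  cases k with
  | zero => simp [gaussBinom_zero_right]
  | succ k => cases k <;> simp [gaussBinom_succ_succ, gaussBinom_zero_left]

lemma eval_one_gaussBinom (n k : ℕ) : (gaussBinom n k).eval 1 = n.choose k := by
  induction n generalizing k with
  | zero => cases k <;> simp [gaussBinom_zero_left]
  | succ n ih =>
    cases k with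
    | zero => simp [gaussBinom_zero_right]
    | succ k => simp [gaussBinom_succ_succ, ih, Nat.choose_succ_succ', add_comm]

lemma gaussBinom_add_two (n k : ℕ) :
    gaussBinom (n + 2) k = X ^ (2 * k) * gaussBinom n k +
      (if k = 0 then 0 else X ^ (k - 1) * (X + 1) * gaussBinom n (k - 1)) +
      if 2 ≤ k then gaussBinom n (k - 2) else 0 := by
  match k with
  | 0 => simp [gaussBinom_succ_zero]
  | 1 =>
    rw [if_neg one_ne_zero, if_neg (by omega)]
    simp only [gaussBinom_succ_succ, Nat.sub_self, gaussBinom_zero_right]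
    ring
  | k + 2 =>
    rw [if_neg (by omega), if_pos (by omega)]
    simp only [gaussBinom_succ_succ, Nat.add_sub_cancel, show k + 2 - 1 = k + 1 from rfl]
    ring

lemma choose_add_two (n k : ℕ) :
    (n + 2).choose k = n.choose k + 2 * (if k = 0 then 0 else n.choose (k - 1)) +
      if 2 ≤ k then n.choose (k - 2) else 0 := by
  have h := congrArg (eval 1) (gaussBinom_add_two n k)
  split_ifs at h ⊢ <;> simp [eval_one_gaussBinom] at h <;> zify <;> linarith

lemma eval_neg_one_gaussBinom_add_two (n k : ℕ) :
    (gaussBinom (n + 2) k).eval (-1) =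
      (gaussBinom n k).eval (-1) + if 2 ≤ k then (gaussBinom n (k - 2)).eval (-1) else 0 := by
  rw [gaussBinom_add_two]
  split_ifs <;> simp [pow_mul]

theorem stmt_16 (n k : ℕ) :
    2 * (losanitsch n k : ℤ) =
      (gaussBinom n k).eval 1 + (gaussBinom n k).eval (-1) := by
  induction n, k using losanitsch.induct with
  | case1 => simp [losanitsch, gaussBinom_zero_left]
  | case2 k hk => simp [losanitsch, gaussBinom_zero_left, hk]
  | case3 k hk => simp [losanitsch, gaussBinom_one_left, hk]
  | case4 k hk => simp [losanitsch, gaussBinom_one_left, hk]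
  | case5 n k ih ih' =>
    rw [eval_one_gaussBinom] at ih ih' ⊢
    rw [losanitsch, choose_add_two, eval_neg_one_gaussBinom_add_two]
    split_ifs <;> push_cast <;> linarith
end

section
/- Define f_n(1) = Σ_{k=0}^{⌊(n−1)/2⌋} L(n−1−k, k). Then f_{2n}(1) = (F_{2n} + F_n)/2 and f_{2n+1}(1) = (F_{2n+1} + F_{n+2})/2, where F_m denotes the m-th Fibonacci number. -/
def f (n : ℕ) : ℕ :=
  ∑ k ∈ Finset.range n, if 2 * k ≤ n - 1 then losanitsch (n - 1 - k) k else 0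

/-!
Splitting off the last two (vanishing) terms of `f (n + 4)` and applying the Losanitsch
recursion termwise gives `f (n + 4) = f (n + 2) + f n + F (n + 1)`: the binomial part is a
shallow diagonal of Pascal's triangle. The Fibonacci numbers satisfy
`F (m + 4) = F (m + 2) + F m + 2 F (m + 1)`, and the correction terms `F n`, `F (n + 2)` obey
the plain Fibonacci recursion, so both sides of the claimed identities satisfy the same
recursion in `n` and agree for `n = 0, 1`.
-/

open Finset

theorem losanitsch_eq_zero_of_lt {n k : ℕ} (h : n < k) : losanitsch n k = 0 := by
  induction n using Nat.strong_induction_on generalizing k with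
  | _ n ih =>
    match n with
    | 0 | 1 => simp [losanitsch]; omega
    | n + 2 =>
      rw [losanitsch, ih n (by omega) (by omega), Nat.choose_eq_zero_of_lt (by omega)]
      split_ifs <;> simp [ih n (by omega) (show n < k - 2 by omega)]

theorem f_eq_sum (n : ℕ) : f n = ∑ k ∈ range n, losanitsch (n - 1 - k) k := by
  refine sum_congr rfl fun k _ => ?_
  split_ifs
  · rfl
  · exact (losanitsch_eq_zero_of_lt (by omega)).symm

theorem sum_range_choose_eq_fib (n : ℕ) :
    ∑ j ∈ range (n + 1), (n - j).choose j = Nat.fib (n + 1) := by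
  rw [Nat.fib_succ_eq_sum_choose, Nat.sum_antidiagonal_eq_sum_range_succ_mk,
    ← sum_range_reflect]
  refine sum_congr rfl fun j hj => ?_
  rw [mem_range] at hj
  congr 1
  omega

theorem f_add_four (n : ℕ) : f (n + 4) = f (n + 2) + f n + Nat.fib (n + 1) := by
  have recursion : ∀ k ∈ range (n + 2), losanitsch (n + 3 - k) k =
      losanitsch (n + 1 - k) k + (if k = 0 then 0 else (n + 1 - k).choose (k - 1)) +
        (if 2 ≤ k then losanitsch (n + 1 - k) (k - 2) else 0) := by
    intro k hk
    rw [mem_range] at hk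
    rw [show n + 3 - k = n + 1 - k + 2 by omega, losanitsch]
  have binomial_part :
      ∑ k ∈ range (n + 2), (if k = 0 then 0 else (n + 1 - k).choose (k - 1)) =
        Nat.fib (n + 1) := by
    rw [sum_range_succ', ← sum_range_choose_eq_fib]
    simp
  have shifted_part :
      ∑ k ∈ range (n + 2), (if 2 ≤ k then losanitsch (n + 1 - k) (k - 2) else 0) = f n := by
    rw [sum_range_succ', sum_range_succ', f_eq_sum]
    simp only [Nat.reduceLeDiff, if_pos, if_false, Nat.add_sub_cancel, add_zero]
    exact sum_congr rfl fun j _ => by rw [show n + 1 - (j + 1 + 1) = n - 1 - j by omega]; rfl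
  rw [f_eq_sum, sum_range_succ, sum_range_succ, losanitsch_eq_zero_of_lt (by omega),
    losanitsch_eq_zero_of_lt (by omega), f_eq_sum (n + 2)]
  simp only [show n + 4 - 1 = n + 3 by rfl, show n + 2 - 1 = n + 1 by rfl, add_zero]
  rw [sum_congr rfl recursion, sum_add_distrib, sum_add_distrib, binomial_part, shifted_part,
    add_right_comm]

theorem fib_add_four (m : ℕ) :
    Nat.fib (m + 4) = Nat.fib (m + 2) + Nat.fib m + 2 * Nat.fib (m + 1) := by
  have h₂ : Nat.fib (m + 2) = Nat.fib m + Nat.fib (m + 1) := Nat.fib_add_two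
  have h₃ : Nat.fib (m + 3) = Nat.fib (m + 1) + Nat.fib (m + 2) := Nat.fib_add_two
  have h₄ : Nat.fib (m + 4) = Nat.fib (m + 2) + Nat.fib (m + 3) := Nat.fib_add_two
  omega

theorem stmt_19 (n : ℕ) :
    2 * f (2 * n) = Nat.fib (2 * n) + Nat.fib n ∧
    2 * f (2 * n + 1) = Nat.fib (2 * n + 1) + Nat.fib (n + 2) := by
  induction n using Nat.twoStepInduction with
  | zero => decide
  | one => decide
  | more n ih₀ ih₁ =>
    rw [show 2 * (n + 1) = 2 * n + 2 by ring, show n + 1 + 2 = n + 3 by rfl,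
      show 2 * n + 2 + 1 = 2 * n + 3 by rfl] at ih₁
    rw [show 2 * (n + 2) = 2 * n + 4 by ring, show n + 2 + 2 = n + 4 by rfl,
      show 2 * n + 4 + 1 = 2 * n + 5 by rfl]
    have hf_even : f (2 * n + 4) = f (2 * n + 2) + f (2 * n) + Nat.fib (2 * n + 1) :=
      f_add_four _
    have hf_odd : f (2 * n + 5) = f (2 * n + 3) + f (2 * n + 1) + Nat.fib (2 * n + 2) :=
      f_add_four _
    have hF_even : Nat.fib (2 * n + 4) =
        Nat.fib (2 * n + 2) + Nat.fib (2 * n) + 2 * Nat.fib (2 * n + 1) := fib_add_four _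
    have hF_odd : Nat.fib (2 * n + 5) =
        Nat.fib (2 * n + 3) + Nat.fib (2 * n + 1) + 2 * Nat.fib (2 * n + 2) := fib_add_four _
    have hF_n : Nat.fib (n + 2) = Nat.fib n + Nat.fib (n + 1) := Nat.fib_add_two
    have hF_n3 : Nat.fib (n + 3) = Nat.fib (n + 1) + Nat.fib (n + 2) := Nat.fib_add_two
    have hF_n4 : Nat.fib (n + 4) = Nat.fib (n + 2) + Nat.fib (n + 3) := Nat.fib_add_two
    constructor <;> omega
end
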